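/- Let Q₄ be the symmetric integer matrix ![![0,1,0],![1,0,0],![0,0,-8]] and let g₁ = ![![1,0,0],![4,1,8],![1,0,1]], g₂ = ![![9,4,24],![4,1,8],![-3,-1,-7]], g₃ = ![![0,1,0],![1,0,0],![0,0,1]]. Then each gᵢ satisfies gᵢᵀ · Q₄ · gᵢ = Q₄; moreover, with D = diag(2,2,16), each matrix D·gᵢ·D⁻¹ has integer entries and carries the subgroup Λ = 2ℤ × 2ℤ × 16ℤ of ℤ³ into itself, so induces an automorphism hᵢ of the finite abelian group A = ℤ³/Λ ≅ ℤ/2 × ℤ/2 × ℤ/16; and the subgroup of Aut(A) generated by h₁, h₂, h₃ is isomorphic to the dihedral group of order 8. -/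

import Mathlib

open Matrix

namespace Stmt3

/-- A Gram matrix (up to sign of the rank-one summand) of the lattice `H ⊕ ⟨8⟩`. -/
def Q : Matrix (Fin 3) (Fin 3) ℤ := !![0, 1, 0; 1, 0, 0; 0, 0, -8]

def g1 : Matrix (Fin 3) (Fin 3) ℤ := !![1, 0, 0; 4, 1, 8; 1, 0, 1]

def g2 : Matrix (Fin 3) (Fin 3) ℤ := !![9, 4, 24; 4, 1, 8; -3, -1, -7]

def g3 : Matrix (Fin 3) (Fin 3) ℤ := !![0, 1, 0; 1, 0, 0; 0, 0, 1]

/-- `D = diag(2, 2, 16)`. -/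
def D : Matrix (Fin 3) (Fin 3) ℤ := Matrix.diagonal ![2, 2, 16]

/-- The subgroup `Λ = 2ℤ × 2ℤ × 16ℤ` of `ℤ³`. -/
def Λ : AddSubgroup (Fin 3 → ℤ) :=
  AddSubgroup.pi Set.univ fun i => AddSubgroup.zmultiples (![(2 : ℤ), 2, 16] i)

/-- The finite abelian group `A = ℤ³/Λ`. -/
abbrev A : Type := (Fin 3 → ℤ) ⧸ Λ

/-! ### Auxiliary machinery -/

@[simp] lemma vec3_zero (a b c : ℤ) : ![a, b, c] 0 = a := rfl
@[simp] lemma vec3_one (a b c : ℤ) : ![a, b, c] 1 = b := rfl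
@[simp] lemma vec3_two (a b c : ℤ) : ![a, b, c] 2 = c := rfl

lemma expl_mulVec (a b c d e f g h i : ℤ) (v : Fin 3 → ℤ) :
    (!![a,b,c;d,e,f;g,h,i]).mulVec v =
      ![a*v 0 + b*v 1 + c*v 2, d*v 0 + e*v 1 + f*v 2, g*v 0 + h*v 1 + i*v 2] := by
  funext j; fin_cases j <;> simp [Matrix.mulVec, dotProduct, Fin.sum_univ_three]

lemma mem_Λ_iff (v : Fin 3 → ℤ) : v ∈ Λ ↔ 2 ∣ v 0 ∧ 2 ∣ v 1 ∧ 16 ∣ v 2 := by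
  constructor
  · intro h
    exact ⟨Int.mem_zmultiples_iff.mp (h 0 trivial), Int.mem_zmultiples_iff.mp (h 1 trivial),
      Int.mem_zmultiples_iff.mp (h 2 trivial)⟩
  · rintro ⟨h0, h1, h2⟩ i _
    fin_cases i
    · exact Int.mem_zmultiples_iff.mpr h0
    · exact Int.mem_zmultiples_iff.mpr h1
    · exact Int.mem_zmultiples_iff.mpr h2

lemma mk_eq_iff (w w' : Fin 3 → ℤ) :
    (QuotientAddGroup.mk w : A) = QuotientAddGroup.mk w' ↔
      2 ∣ w' 0 - w 0 ∧ 2 ∣ w' 1 - w 1 ∧ 16 ∣ w' 2 - w 2 := by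
  rw [QuotientAddGroup.eq, mem_Λ_iff]
  simp only [Pi.add_apply, Pi.neg_apply]
  omega

def toHom (M : Matrix (Fin 3) (Fin 3) ℤ) : (Fin 3 → ℤ) →+ (Fin 3 → ℤ) :=
  AddMonoidHom.mk' (fun v => M.mulVec v) (fun v w => Matrix.mulVec_add M v w)

/-- The automorphism of `A` induced by a matrix preserving `Λ`, with explicit inverse. -/
def qAut (M Mi : Matrix (Fin 3) (Fin 3) ℤ) (hM : ∀ v ∈ Λ, M.mulVec v ∈ Λ)
    (hMi : ∀ v ∈ Λ, Mi.mulVec v ∈ Λ) (hl : Mi * M = 1) (hr : M * Mi = 1) : AddAut A where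
  toFun := QuotientAddGroup.map Λ Λ (toHom M) hM
  invFun := QuotientAddGroup.map Λ Λ (toHom Mi) hMi
  left_inv := by
    intro a
    induction a using QuotientAddGroup.induction_on with
    | H v =>
      show QuotientAddGroup.mk (Mi.mulVec (M.mulVec v)) = QuotientAddGroup.mk v
      rw [Matrix.mulVec_mulVec, hl, Matrix.one_mulVec]
  right_inv := by
    intro a
    induction a using QuotientAddGroup.induction_on with
    | H v =>
      show QuotientAddGroup.mk (M.mulVec (Mi.mulVec v)) = QuotientAddGroup.mk v
      rw [Matrix.mulVec_mulVec, hr, Matrix.one_mulVec]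
  map_add' := (QuotientAddGroup.map Λ Λ (toHom M) hM).map_add

lemma qAut_mk (M Mi : Matrix (Fin 3) (Fin 3) ℤ) (hM hMi hl hr) (v : Fin 3 → ℤ) :
    qAut M Mi hM hMi hl hr (QuotientAddGroup.mk v) = QuotientAddGroup.mk (M.mulVec v) := rfl

/-! ### The isomorphism `A ≃+ ℤ/2 × ℤ/2 × ℤ/16` -/

def φ0 : (Fin 3 → ℤ) →+ ZMod 2 × ZMod 2 × ZMod 16 :=
  AddMonoidHom.mk' (fun v => ((v 0 : ZMod 2), (v 1 : ZMod 2), (v 2 : ZMod 16)))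
    (by intro v w; simp [Prod.ext_iff])

lemma φ0_ker : φ0.ker = Λ := by
  ext v
  simp [φ0, AddMonoidHom.mem_ker, AddMonoidHom.mk'_apply, mem_Λ_iff, Prod.ext_iff,
    ZMod.intCast_zmod_eq_zero_iff_dvd]

lemma φ0_surj : Function.Surjective φ0 := by
  rintro ⟨a, b, c⟩
  refine ⟨![(a.val : ℤ), (b.val : ℤ), (c.val : ℤ)], ?_⟩
  simp [φ0, Prod.ext_iff, ZMod.natCast_val, ZMod.cast_id]

noncomputable def φ : A ≃+ ZMod 2 × ZMod 2 × ZMod 16 :=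
  (QuotientAddGroup.quotientAddEquivOfEq φ0_ker.symm).trans
    (QuotientAddGroup.quotientKerEquivOfSurjective φ0 φ0_surj)

/-! ### A homomorphism criterion for the dihedral group of order 8 -/

lemma dihedralHom {G : Type*} [Group G] (R S : G) (h4 : R ^ 4 = 1) (h2 : S ^ 2 = 1)
    (hco : R * S = S * R ^ 3) :
    ∃ F : DihedralGroup 4 →* G, (∀ i : ZMod 4, F (.r i) = R ^ i.val) ∧
      (∀ i : ZMod 4, F (.sr i) = S * R ^ i.val) := by
  have key : ∀ a b : ℕ, a % 4 = b % 4 → R ^ a = R ^ b := fun a b h => by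
    rw [pow_eq_pow_mod a h4, pow_eq_pow_mod b h4, h]
  have kc : ∀ k : ℕ, R ^ k * S = S * R ^ (3 * k) := by
    intro k; induction k with
    | zero => simp
    | succ n ih =>
      calc R ^ (n+1) * S = R ^ n * (R * S) := by rw [pow_succ, mul_assoc]
        _ = R ^ n * S * R ^ 3 := by rw [hco, mul_assoc]
        _ = S * R ^ (3*n) * R ^ 3 := by rw [ih]
        _ = S * R ^ (3*(n+1)) := by rw [mul_assoc, ← pow_add, Nat.mul_succ]
  have A1 : ∀ i j : ZMod 4, (i + j).val % 4 = (i.val + j.val) % 4 := by decide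
  have A2 : ∀ i j : ZMod 4, (j - i).val % 4 = (3 * i.val + j.val) % 4 := by decide
  refine ⟨MonoidHom.mk' (fun x => match x with
    | .r i => R ^ i.val
    | .sr i => S * R ^ i.val) ?_, fun i => rfl, fun i => rfl⟩
  rintro (i | i) (j | j)
  · show R ^ (i + j).val = R ^ i.val * R ^ j.val
    rw [← pow_add]; exact key _ _ (A1 i j)
  · show S * R ^ (j - i).val = R ^ i.val * (S * R ^ j.val)
    rw [← mul_assoc, kc, mul_assoc, ← pow_add]
    exact congrArg (S * ·) (key _ _ (A2 i j))
  · show S * R ^ (i + j).val = S * R ^ i.val * R ^ j.val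
    rw [mul_assoc, ← pow_add]
    exact congrArg (S * ·) (key _ _ (A1 i j))
  · show R ^ (j - i).val = S * R ^ i.val * (S * R ^ j.val)
    calc R ^ (j - i).val = R ^ (3 * i.val + j.val) := key _ _ (A2 i j)
      _ = S * (S * (R ^ (3 * i.val) * R ^ j.val)) := by
          rw [← mul_assoc, ← mul_assoc, ← sq, h2, one_mul, pow_add]
      _ = S * R ^ i.val * (S * R ^ j.val) := by
          conv_rhs => rw [mul_assoc, ← mul_assoc (R ^ i.val), kc, mul_assoc]

/-! ### The explicit matrices `D·gᵢ·D⁻¹` and their inverses -/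

def MA : Matrix (Fin 3) (Fin 3) ℤ := !![1,0,0;4,1,1;8,0,1]
def MB : Matrix (Fin 3) (Fin 3) ℤ := !![9,4,3;4,1,1;-24,-8,-7]
def MC : Matrix (Fin 3) (Fin 3) ℤ := !![0,1,0;1,0,0;0,0,1]
def MAi : Matrix (Fin 3) (Fin 3) ℤ := !![1,0,0;4,1,-1;-8,0,1]
def MBi : Matrix (Fin 3) (Fin 3) ℤ := !![1,4,1;4,9,3;-8,-24,-7]
def NN : Matrix (Fin 3) (Fin 3) ℤ := !![0,1,0;1,4,1;0,8,1]

lemma stabMA : ∀ v ∈ Λ, MA.mulVec v ∈ Λ := by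
  intro v hv; rw [mem_Λ_iff] at hv
  rw [MA, expl_mulVec, mem_Λ_iff]; simp only [vec3_zero, vec3_one, vec3_two]; omega

lemma stabMB : ∀ v ∈ Λ, MB.mulVec v ∈ Λ := by
  intro v hv; rw [mem_Λ_iff] at hv
  rw [MB, expl_mulVec, mem_Λ_iff]; simp only [vec3_zero, vec3_one, vec3_two]; omega

lemma stabMC : ∀ v ∈ Λ, MC.mulVec v ∈ Λ := by
  intro v hv; rw [mem_Λ_iff] at hv
  rw [MC, expl_mulVec, mem_Λ_iff]; simp only [vec3_zero, vec3_one, vec3_two]; omega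

lemma stabMAi : ∀ v ∈ Λ, MAi.mulVec v ∈ Λ := by
  intro v hv; rw [mem_Λ_iff] at hv
  rw [MAi, expl_mulVec, mem_Λ_iff]; simp only [vec3_zero, vec3_one, vec3_two]; omega

lemma stabMBi : ∀ v ∈ Λ, MBi.mulVec v ∈ Λ := by
  intro v hv; rw [mem_Λ_iff] at hv
  rw [MBi, expl_mulVec, mem_Λ_iff]; simp only [vec3_zero, vec3_one, vec3_two]; omega

/-! ### The three automorphisms of `A` -/

abbrev AutA : Type := Multiplicative (AddAut A)

instance : FunLike AutA A A where
  coe g := ⇑(Multiplicative.toAdd g : AddAut A)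
  coe_injective f g h := Multiplicative.toAdd.injective (DFunLike.coe_injective h)

noncomputable def h1A : AutA := Multiplicative.ofAdd <| qAut MA MAi stabMA stabMAi (by decide) (by decide)
noncomputable def h2A : AutA := Multiplicative.ofAdd <| qAut MB MBi stabMB stabMBi (by decide) (by decide)
noncomputable def h3A : AutA := Multiplicative.ofAdd <| qAut MC MC stabMC stabMC (by decide) (by decide)

lemma h1A_mk (v : Fin 3 → ℤ) :
    h1A (QuotientAddGroup.mk v) = QuotientAddGroup.mk (MA.mulVec v) := rfl
lemma h2A_mk (v : Fin 3 → ℤ) :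
    h2A (QuotientAddGroup.mk v) = QuotientAddGroup.mk (MB.mulVec v) := rfl
lemma h3A_mk (v : Fin 3 → ℤ) :
    h3A (QuotientAddGroup.mk v) = QuotientAddGroup.mk (MC.mulVec v) := rfl

lemma mulA_mk (E E' : AutA) (P P' : Matrix (Fin 3) (Fin 3) ℤ)
    (hE : ∀ v, E (QuotientAddGroup.mk v) = QuotientAddGroup.mk (P.mulVec v))
    (hE' : ∀ v, E' (QuotientAddGroup.mk v) = QuotientAddGroup.mk (P'.mulVec v)) (v : Fin 3 → ℤ) :
    (E * E') (QuotientAddGroup.mk v) = QuotientAddGroup.mk ((P * P').mulVec v) := by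
  show E (E' (QuotientAddGroup.mk v)) = _
  rw [hE', hE, Matrix.mulVec_mulVec]

noncomputable def RR : AutA := h1A * h3A

lemma hRR_mk (v : Fin 3 → ℤ) :
    RR (QuotientAddGroup.mk v) = QuotientAddGroup.mk (NN.mulVec v) := by
  have := mulA_mk h1A h3A MA MC h1A_mk h3A_mk v
  rwa [show MA * MC = NN from by decide] at this

lemma pow_mk (E : AutA) (P : Matrix (Fin 3) (Fin 3) ℤ)
    (hE : ∀ v, E (QuotientAddGroup.mk v) = QuotientAddGroup.mk (P.mulVec v)) (k : ℕ) :
    ∀ v : Fin 3 → ℤ,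
      (E ^ k) (QuotientAddGroup.mk v) = QuotientAddGroup.mk ((P ^ k).mulVec v) := by
  induction k with
  | zero =>
    intro v
    rw [pow_zero, pow_zero, Matrix.one_mulVec]; rfl
  | succ n ih =>
    intro v
    rw [pow_succ, pow_succ]
    have : (E ^ n * E) (QuotientAddGroup.mk v) = (E ^ n) (E (QuotientAddGroup.mk v)) := rfl
    rw [this, hE, ih, Matrix.mulVec_mulVec]

lemma hS2 : h3A ^ 2 = 1 := by
  refine Multiplicative.toAdd.injective (AddEquiv.ext fun a => ?_)
  induction a using QuotientAddGroup.induction_on with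
  | H v =>
    rw [pow_mk h3A MC h3A_mk 2 v, show MC ^ 2 = (1 : Matrix (Fin 3) (Fin 3) ℤ) from by decide,
      Matrix.one_mulVec]
    rfl

lemma hR4 : RR ^ 4 = 1 := by
  refine Multiplicative.toAdd.injective (AddEquiv.ext fun a => ?_)
  induction a using QuotientAddGroup.induction_on with
  | H v =>
    rw [pow_mk RR NN hRR_mk 4 v,
      show NN ^ 4 = !![25,144,30;144,841,174;240,1392,289] from by decide, expl_mulVec]
    show _ = QuotientAddGroup.mk v
    rw [mk_eq_iff]; simp only [vec3_zero, vec3_one, vec3_two]; omega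

lemma hE1 : h1A = h3A * RR ^ 3 := by
  refine Multiplicative.toAdd.injective (AddEquiv.ext fun a => ?_)
  induction a using QuotientAddGroup.induction_on with
  | H v =>
    rw [h1A_mk, mulA_mk h3A (RR ^ 3) MC (NN ^ 3) h3A_mk (pow_mk RR NN hRR_mk 3) v,
      show MC * NN ^ 3 = !![25,144,30;4,25,5;40,240,49] from by decide,
      MA, expl_mulVec, expl_mulVec, mk_eq_iff]
    simp only [vec3_zero, vec3_one, vec3_two]; omega

lemma hE2 : h2A = RR ^ 2 := by
  refine Multiplicative.toAdd.injective (AddEquiv.ext fun a => ?_)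
  induction a using QuotientAddGroup.induction_on with
  | H v =>
    rw [h2A_mk, pow_mk RR NN hRR_mk 2 v,
      show NN ^ 2 = !![1,4,1;4,25,5;8,40,9] from by decide,
      MB, expl_mulVec, expl_mulVec, mk_eq_iff]
    simp only [vec3_zero, vec3_one, vec3_two]; omega

lemma hco : RR * h3A = h3A * RR ^ 3 := by
  have h : RR * h3A = h1A := by
    show h1A * h3A * h3A = h1A
    rw [mul_assoc, ← sq, hS2, mul_one]
  rw [h, hE1]

theorem statement3 :
    (g1ᵀ * Q * g1 = Q ∧ g2ᵀ * Q * g2 = Q ∧ g3ᵀ * Q * g3 = Q) ∧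
    Nonempty (A ≃+ ZMod 2 × ZMod 2 × ZMod 16) ∧
    ∃ M1 M2 M3 : Matrix (Fin 3) (Fin 3) ℤ,
      -- `Mᵢ` is the (integral) matrix `D·gᵢ·D⁻¹`
      M1 * D = D * g1 ∧ M2 * D = D * g2 ∧ M3 * D = D * g3 ∧
      -- each `D·gᵢ·D⁻¹` carries `Λ` into itself
      (∀ v ∈ Λ, M1.mulVec v ∈ Λ) ∧
      (∀ v ∈ Λ, M2.mulVec v ∈ Λ) ∧
      (∀ v ∈ Λ, M3.mulVec v ∈ Λ) ∧
      -- hence induces automorphisms `hᵢ` of `A`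
      ∃ h1 h2 h3 : AddAut A,
        (∀ v : Fin 3 → ℤ,
            h1 (QuotientAddGroup.mk v) = QuotientAddGroup.mk (M1.mulVec v)) ∧
        (∀ v : Fin 3 → ℤ,
            h2 (QuotientAddGroup.mk v) = QuotientAddGroup.mk (M2.mulVec v)) ∧
        (∀ v : Fin 3 → ℤ,
            h3 (QuotientAddGroup.mk v) = QuotientAddGroup.mk (M3.mulVec v)) ∧
        -- the subgroup generated by `h₁, h₂, h₃` is isomorphic to the
        -- dihedral group of order 8
        Nonempty ((Subgroup.closure {Multiplicative.ofAdd h1, Multiplicative.ofAdd h2,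
              Multiplicative.ofAdd h3} : Subgroup (Multiplicative (AddAut A))) ≃*
            DihedralGroup 4) := by
  obtain ⟨F, hFr, hFsr⟩ := dihedralHom RR h3A hR4 hS2 hco
  -- injectivity of `F`
  have hinj : Function.Injective F := by
    refine (injective_iff_map_eq_one F).2 ?_
    have hSRk : ∀ (k : ℕ) (v : Fin 3 → ℤ),
        (h3A * RR ^ k) (QuotientAddGroup.mk v) =
          QuotientAddGroup.mk ((MC * NN ^ k).mulVec v) :=
      fun k => mulA_mk h3A (RR ^ k) MC (NN ^ k) h3A_mk (pow_mk RR NN hRR_mk k)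
    have hcases : ∀ j : ZMod 4, j = 0 ∨ j = 1 ∨ j = 2 ∨ j = 3 := by decide
    rintro (i | i) hx
    · rcases hcases i with h | h | h | h <;> subst h
      · rfl
      · exfalso
        rw [hFr, show ((1 : ZMod 4)).val = 1 from rfl] at hx
        have := congrArg (fun g : AutA => g (QuotientAddGroup.mk ![1,0,0])) hx
        rw [pow_mk RR NN hRR_mk 1 ![1,0,0],
          show (NN ^ 1).mulVec ![1,0,0] = ![0,1,0] from by decide] at this
        have h1 : (1 : AutA) (QuotientAddGroup.mk ![1,0,0]) =
            QuotientAddGroup.mk ![(1:ℤ),0,0] := rfl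
        rw [h1, mk_eq_iff] at this
        simp only [vec3_zero, vec3_one, vec3_two] at this; omega
      · exfalso
        rw [hFr, show ((2 : ZMod 4)).val = 2 from rfl] at hx
        have := congrArg (fun g : AutA => g (QuotientAddGroup.mk ![0,0,1])) hx
        rw [pow_mk RR NN hRR_mk 2 ![0,0,1],
          show (NN ^ 2).mulVec ![0,0,1] = ![1,5,9] from by decide] at this
        have h1 : (1 : AutA) (QuotientAddGroup.mk ![0,0,1]) =
            QuotientAddGroup.mk ![(0:ℤ),0,1] := rfl
        rw [h1, mk_eq_iff] at this
        simp only [vec3_zero, vec3_one, vec3_two] at this; omega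
      · exfalso
        rw [hFr, show ((3 : ZMod 4)).val = 3 from rfl] at hx
        have := congrArg (fun g : AutA => g (QuotientAddGroup.mk ![1,0,0])) hx
        rw [pow_mk RR NN hRR_mk 3 ![1,0,0],
          show (NN ^ 3).mulVec ![1,0,0] = ![4,25,40] from by decide] at this
        have h1 : (1 : AutA) (QuotientAddGroup.mk ![1,0,0]) =
            QuotientAddGroup.mk ![(1:ℤ),0,0] := rfl
        rw [h1, mk_eq_iff] at this
        simp only [vec3_zero, vec3_one, vec3_two] at this; omega
    · exfalso
      rcases hcases i with h | h | h | h <;> subst h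
      · rw [hFsr, show ((0 : ZMod 4)).val = 0 from rfl] at hx
        have := congrArg (fun g : AutA => g (QuotientAddGroup.mk ![1,0,0])) hx
        rw [hSRk 0 ![1,0,0],
          show (MC * NN ^ 0).mulVec ![1,0,0] = ![0,1,0] from by decide] at this
        have h1 : (1 : AutA) (QuotientAddGroup.mk ![1,0,0]) =
            QuotientAddGroup.mk ![(1:ℤ),0,0] := rfl
        rw [h1, mk_eq_iff] at this
        simp only [vec3_zero, vec3_one, vec3_two] at this; omega
      · rw [hFsr, show ((1 : ZMod 4)).val = 1 from rfl] at hx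
        have := congrArg (fun g : AutA => g (QuotientAddGroup.mk ![0,0,1])) hx
        rw [hSRk 1 ![0,0,1],
          show (MC * NN ^ 1).mulVec ![0,0,1] = ![1,0,1] from by decide] at this
        have h1 : (1 : AutA) (QuotientAddGroup.mk ![0,0,1]) =
            QuotientAddGroup.mk ![(0:ℤ),0,1] := rfl
        rw [h1, mk_eq_iff] at this
        simp only [vec3_zero, vec3_one, vec3_two] at this; omega
      · rw [hFsr, show ((2 : ZMod 4)).val = 2 from rfl] at hx
        have := congrArg (fun g : AutA => g (QuotientAddGroup.mk ![1,0,0])) hx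
        rw [hSRk 2 ![1,0,0],
          show (MC * NN ^ 2).mulVec ![1,0,0] = ![4,1,8] from by decide] at this
        have h1 : (1 : AutA) (QuotientAddGroup.mk ![1,0,0]) =
            QuotientAddGroup.mk ![(1:ℤ),0,0] := rfl
        rw [h1, mk_eq_iff] at this
        simp only [vec3_zero, vec3_one, vec3_two] at this; omega
      · rw [hFsr, show ((3 : ZMod 4)).val = 3 from rfl] at hx
        have := congrArg (fun g : AutA => g (QuotientAddGroup.mk ![0,0,1])) hx
        rw [hSRk 3 ![0,0,1],
          show (MC * NN ^ 3).mulVec ![0,0,1] = ![30,5,49] from by decide] at this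
        have h1 : (1 : AutA) (QuotientAddGroup.mk ![0,0,1]) =
            QuotientAddGroup.mk ![(0:ℤ),0,1] := rfl
        rw [h1, mk_eq_iff] at this
        simp only [vec3_zero, vec3_one, vec3_two] at this; omega
  -- the range of `F` is the closure of `{h1A, h2A, h3A}`
  have hmem1 : h1A ∈ ({h1A, h2A, h3A} : Set AutA) := by simp
  have hmem2 : h2A ∈ ({h1A, h2A, h3A} : Set AutA) := by simp
  have hmem3 : h3A ∈ ({h1A, h2A, h3A} : Set AutA) := by simp
  have hRRmem : RR ∈ Subgroup.closure ({h1A, h2A, h3A} : Set AutA) := by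
    show h1A * h3A ∈ _
    exact mul_mem (Subgroup.subset_closure hmem1) (Subgroup.subset_closure hmem3)
  have hrange : F.range = Subgroup.closure ({h1A, h2A, h3A} : Set AutA) := by
    apply le_antisymm
    · rintro x ⟨y, rfl⟩
      cases y with
      | r i => rw [hFr]; exact pow_mem hRRmem _
      | sr i => rw [hFsr]; exact mul_mem (Subgroup.subset_closure hmem3) (pow_mem hRRmem _)
    · rw [Subgroup.closure_le]
      rintro x (rfl | rfl | rfl)
      · exact ⟨DihedralGroup.sr 3, by
          rw [hFsr, show ((3 : ZMod 4)).val = 3 from rfl]; exact hE1.symm⟩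
      · exact ⟨DihedralGroup.r 2, by
          rw [hFr, show ((2 : ZMod 4)).val = 2 from rfl]; exact hE2.symm⟩
      · exact ⟨DihedralGroup.sr 0, by
          rw [hFsr, show ((0 : ZMod 4)).val = 0 from rfl, pow_zero, mul_one]⟩
  refine ⟨⟨by decide, by decide, by decide⟩, ⟨φ⟩, MA, MB, MC,
    by decide, by decide, by decide, stabMA, stabMB, stabMC,
    Multiplicative.toAdd h1A, Multiplicative.toAdd h2A, Multiplicative.toAdd h3A, h1A_mk, h2A_mk, h3A_mk,
    ⟨(MulEquiv.subgroupCongr hrange.symm).trans (MonoidHom.ofInjective hinj).symm⟩⟩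

end Stmt3
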